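/- Let X be a normal space such that every one-point subset of X is Gδ. Then the socle of B₁(X) is an essential ideal of B₁(X) and is a free ideal (i.e., the intersection of the zero sets of its members is empty). -/

import Mathlib

open Filter Topology

def IsBaireOne {X : Type*} [TopologicalSpace X] (f : X → ℝ) : Prop :=
  ∃ F : ℕ → X → ℝ, (∀ n, Continuous (F n)) ∧
    ∀ x, Filter.Tendsto (fun n => F n x) Filter.atTop (nhds (f x))

def B1 (X : Type*) [TopologicalSpace X] : Subring (X → ℝ) where
  carrier := {f | IsBaireOne f}
  zero_mem' := ⟨fun _ _ => 0, fun _ => continuous_const, fun _ => tendsto_const_nhds⟩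
  one_mem' := ⟨fun _ _ => 1, fun _ => continuous_const, fun _ => tendsto_const_nhds⟩
  add_mem' := by
    rintro f g ⟨F, hF, hFf⟩ ⟨G, hG, hGg⟩
    exact ⟨fun n => F n + G n, fun n => (hF n).add (hG n), fun x => (hFf x).add (hGg x)⟩
  mul_mem' := by
    rintro f g ⟨F, hF, hFf⟩ ⟨G, hG, hGg⟩
    exact ⟨fun n => F n * G n, fun n => (hF n).mul (hG n), fun x => (hFf x).mul (hGg x)⟩
  neg_mem' := by
    rintro f ⟨F, hF, hFf⟩
    exact ⟨fun n => -F n, fun n => (hF n).neg, fun x => (hFf x).neg⟩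

def zset {X : Type*} [TopologicalSpace X] (f : ↥(B1 X)) : Set X := {x | (f : X → ℝ) x = 0}

noncomputable def chi {X : Type*} (p : X) : X → ℝ := Set.indicator {p} (fun _ => 1)

def IsFsigma {X : Type*} [TopologicalSpace X] (s : Set X) : Prop :=
  ∃ c : ℕ → Set X, (∀ n, IsClosed (c n)) ∧ s = ⋃ n, c n

/-!
For every point `p`, the characteristic function `χₚ` of `{p}` is Baire one: writing
`{p} = ⋂ Uₙ`, the products of Urysohn functions separating `p` from `U₀ᶜ, …, Uₙᶜ` converge
pointwise to `χₚ`. Since `f * χₚ = f p • χₚ`, every nonzero element of `B₁(X) χₚ` generates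
`χₚ`, so this principal ideal is minimal and `χₚ` lies in the socle. A nonzero ideal contains
some `f` with `f p ≠ 0`, hence contains `χₚ = (f p)⁻¹ f χₚ`; and `χₚ` does not vanish at `p`.
-/

theorem Ideal.isAtom_span_singleton_of_mem_span {R : Type*} [CommSemiring R] {e : R}
    (he : e ≠ 0) (h : ∀ x ∈ Ideal.span {e}, x ≠ 0 → e ∈ Ideal.span {x}) :
    IsAtom (Ideal.span {e}) := by
  refine isAtom_iff_le_of_ge.mpr ⟨by simpa using he, fun J hJ hJe => ?_⟩
  obtain ⟨x, hxJ, hx⟩ := Submodule.ne_bot_iff J |>.mp hJ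
  exact (Ideal.span_singleton_le_iff_mem J).mpr
    (Ideal.span_le.mpr (by simpa using hxJ) (h x (hJe hxJ) hx))

section BaireOne

variable {X : Type*} [TopologicalSpace X]

theorem Continuous.isBaireOne {f : X → ℝ} (hf : Continuous f) : IsBaireOne f :=
  ⟨fun _ => f, fun _ => hf, fun _ => tendsto_const_nhds⟩

theorem isBaireOne_indicator_one_of_isClosed_of_isGδ [NormalSpace X] {s : Set X}
    (hs : IsClosed s) (hsG : IsGδ s) : IsBaireOne (s.indicator 1) := by
  obtain ⟨U, hUo, rfl⟩ := hsG.eq_iInter_nat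
  have urysohn : ∀ n, ∃ f : C(X, ℝ), Set.EqOn f 1 (⋂ n, U n) ∧ Set.EqOn f 0 (U n)ᶜ := by
    intro n
    obtain ⟨f, hf0, hf1, -⟩ := exists_continuous_zero_one_of_isClosed (hUo n).isClosed_compl hs
      (Set.disjoint_compl_left_iff_subset.mpr (Set.iInter_subset U n))
    exact ⟨f, hf1, hf0⟩
  choose f hf1 hf0 using urysohn
  refine ⟨fun n x => ∏ k ∈ Finset.range (n + 1), f k x,
    fun n => continuous_finsetProd _ fun k _ => (f k).continuous, fun x => ?_⟩
  by_cases hx : x ∈ ⋂ n, U n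
  · simp [hx, Finset.prod_eq_one fun k _ => hf1 k hx]
  · obtain ⟨m, hm⟩ : ∃ m, x ∉ U m := by simpa using hx
    rw [Set.indicator_of_notMem hx]
    refine tendsto_const_nhds.congr' ?_
    filter_upwards [eventually_ge_atTop m] with n hn
    exact (Finset.prod_eq_zero (Finset.mem_range.mpr (by omega)) (hf0 m hm)).symm

end BaireOne

theorem chi_apply_self {X : Type*} (p : X) : chi p p = 1 := by simp [chi]

theorem mul_chi {X : Type*} (f : X → ℝ) (p : X) : f * chi p = f p • chi p := by
  ext x
  by_cases hx : x = p
  · simp [hx]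
  · simp [chi, hx]

section Socle

variable {X : Type*} [TopologicalSpace X] [T1Space X] [NormalSpace X]

noncomputable def B1.singletonIndicator {p : X} (hp : IsGδ ({p} : Set X)) : B1 X :=
  ⟨chi p, isBaireOne_indicator_one_of_isClosed_of_isGδ isClosed_singleton hp⟩

theorem B1.singletonIndicator_mem_span_singleton {p : X} (hp : IsGδ ({p} : Set X)) {f : B1 X}
    (hf : (f : X → ℝ) p ≠ 0) : B1.singletonIndicator hp ∈ Ideal.span {f} := by
  let c : B1 X := ⟨fun _ => ((f : X → ℝ) p)⁻¹, continuous_const.isBaireOne⟩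
  have hchi : B1.singletonIndicator hp = c * B1.singletonIndicator hp * f := by
    apply Subtype.ext
    change chi p = (fun _ => ((f : X → ℝ) p)⁻¹) * chi p * (f : X → ℝ)
    rw [mul_assoc, mul_comm (chi p), mul_chi]
    ext x
    simp [hf]
  rw [hchi]
  exact Ideal.mul_mem_left _ _ (Ideal.mem_span_singleton_self f)

theorem B1.eq_smul_chi_of_mem_span_singletonIndicator {p : X} (hp : IsGδ ({p} : Set X))
    {f : B1 X} (hf : f ∈ Ideal.span {B1.singletonIndicator hp}) :
    (f : X → ℝ) = (f : X → ℝ) p • chi p := by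
  obtain ⟨g, rfl⟩ := Ideal.mem_span_singleton'.mp hf
  change (g : X → ℝ) * chi p = ((g : X → ℝ) * chi p) p • chi p
  rw [mul_chi, Pi.smul_apply, chi_apply_self, smul_eq_mul, mul_one]

theorem B1.singletonIndicator_ne_zero {p : X} (hp : IsGδ ({p} : Set X)) :
    B1.singletonIndicator hp ≠ 0 := fun h => by
  simpa [B1.singletonIndicator, chi_apply_self] using congrFun (congrArg Subtype.val h) p

theorem B1.isAtom_span_singletonIndicator {p : X} (hp : IsGδ ({p} : Set X)) :
    IsAtom (Ideal.span {B1.singletonIndicator hp}) := by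
  refine Ideal.isAtom_span_singleton_of_mem_span (B1.singletonIndicator_ne_zero hp)
    fun f hf hf0 => ?_
  refine B1.singletonIndicator_mem_span_singleton hp fun hfp => hf0 (Subtype.ext ?_)
  rw [B1.eq_smul_chi_of_mem_span_singletonIndicator hp hf, hfp, zero_smul]
  rfl

theorem B1.singletonIndicator_mem_socle {p : X} (hp : IsGδ ({p} : Set X)) :
    B1.singletonIndicator hp ∈ sSup {J : Ideal (B1 X) | IsAtom J} :=
  le_sSup (s := {J : Ideal (B1 X) | IsAtom J}) (B1.isAtom_span_singletonIndicator hp)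
    (Ideal.mem_span_singleton_self _)

end Socle

theorem stmt_5 {X : Type*} [TopologicalSpace X] [T1Space X] [NormalSpace X]
    (hG : ∀ p : X, IsGδ ({p} : Set X)) :
    (∀ J : Ideal ↥(B1 X), J ≠ ⊥ → (sSup {J : Ideal ↥(B1 X) | IsAtom J}) ⊓ J ≠ ⊥) ∧
      (⋂ f ∈ (sSup {J : Ideal ↥(B1 X) | IsAtom J}), zset f) = ∅ := by
  refine ⟨fun J hJ => ?_, ?_⟩
  · obtain ⟨f, hfJ, hf0⟩ := Submodule.ne_bot_iff J |>.mp hJ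
    obtain ⟨p, hp⟩ : ∃ p, (f : X → ℝ) p ≠ 0 := by
      by_contra! h
      exact hf0 (Subtype.ext (funext h))
    have hχJ : B1.singletonIndicator (hG p) ∈ J := (Ideal.span_singleton_le_iff_mem J).mpr hfJ
      (B1.singletonIndicator_mem_span_singleton (hG p) hp)
    exact Submodule.ne_bot_iff _ |>.mpr ⟨_, ⟨B1.singletonIndicator_mem_socle (hG p), hχJ⟩,
      B1.singletonIndicator_ne_zero (hG p)⟩
  · refine Set.eq_empty_of_forall_notMem fun p hp => ?_
    have := Set.mem_iInter₂.mp hp _ (B1.singletonIndicator_mem_socle (hG p))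
    simp [zset, B1.singletonIndicator, chi_apply_self] at this
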